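/- arXiv:2310.14889 — 5 statements merged into one kernel-verified Lean document; each statement's English description precedes it below -/
import Mathlib

section
/- Let d > 2 be an integer and let D > 0, σ > 0, a > 0 be real numbers. Suppose S : ℝ × ℝ → ℝ is such that for every r > a and t > 0, S is twice differentiable in its first (space) argument and differentiable in its second (time) argument, and S satisfies the positive-drift backward equation ∂ₜS(r,t) = D·[∂ᵣᵣS(r,t) + ((d−1)/r + σ/r^{d−1})·∂ᵣS(r,t)] for all r > a, t > 0. Then the function (r,t) ↦ S(r,t)/H₊(r) satisfies the negative-drift backward equation ∂ₜ(S/H₊)(r,t) = D·[∂ᵣᵣ(S/H₊)(r,t) + ((d−1)/r − σ/r^{d−1})·∂ᵣ(S/H₊)(r,t)] for all r > a, t > 0. -/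
/-- The hitting probability `H₊(r) = exp[(σ/(d−2))·(r^{2−d} − a^{2−d})]` for a particle
diffusing in `d > 2` dimensions with outward radial drift of strength `σ`, targeting the
sphere of radius `a`. -/
noncomputable def Hplus (d : ℕ) (σ a r : ℝ) : ℝ :=
  Real.exp (σ / ((d : ℝ) - 2) * (r ^ ((2 : ℝ) - (d : ℝ)) - a ^ ((2 : ℝ) - (d : ℝ))))


private lemma duality_alg_key (u2 u1 u0 E r p σ D dd : ℝ) (hr : r ≠ 0) (hp : p ≠ 0) :
    D * (u2 + ((dd - 1) / r + σ / p) * u1) * E =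
      D * ((u2 * E + u1 * (σ * p⁻¹ * E) + (u1 * (σ * p⁻¹ * E)
          + u0 * (σ * ((1 - dd) * (p⁻¹ / r)) * E + σ * p⁻¹ * (σ * p⁻¹ * E))))
        + ((dd - 1) / r - σ / p) * (u1 * E + u0 * (σ * p⁻¹ * E))) := by
  field_simp
  ring

/-- If `S` solves the positive-drift backward equation on `(a,∞) × (0,∞)`, then `S/H₊`
solves the negative-drift backward equation there. -/
theorem duality_pos_to_neg (d : ℕ) (hd : 2 < d) (D σ a : ℝ) (hD : 0 < D) (hσ : 0 < σ)
    (ha : 0 < a) (S : ℝ × ℝ → ℝ)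
    (hspace1 : ∀ r t : ℝ, a < r → 0 < t → DifferentiableAt ℝ (fun ρ => S (ρ, t)) r)
    (hspace2 : ∀ r t : ℝ, a < r → 0 < t → DifferentiableAt ℝ (deriv (fun ρ => S (ρ, t))) r)
    (htime : ∀ r t : ℝ, a < r → 0 < t → DifferentiableAt ℝ (fun τ => S (r, τ)) t)
    (hpde : ∀ r t : ℝ, a < r → 0 < t →
      deriv (fun τ => S (r, τ)) t =
        D * (deriv (deriv (fun ρ => S (ρ, t))) r +
          (((d : ℝ) - 1) / r + σ / r ^ (d - 1)) * deriv (fun ρ => S (ρ, t)) r)) :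
    ∀ r t : ℝ, a < r → 0 < t →
      deriv (fun τ => S (r, τ) / Hplus d σ a r) t =
        D * (deriv (deriv (fun ρ => S (ρ, t) / Hplus d σ a ρ)) r +
          (((d : ℝ) - 1) / r - σ / r ^ (d - 1)) *
            deriv (fun ρ => S (ρ, t) / Hplus d σ a ρ) r) := by
  intro r t hr ht
  have hr0 : (0:ℝ) < r := ha.trans hr
  have hrne : r ≠ 0 := hr0.ne'
  have hd2 : (d:ℝ) - 2 ≠ 0 := by
    have : (2:ℝ) < d := by exact_mod_cast hd
    linarith
  set c : ℝ := σ / ((d:ℝ) - 2) with hc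
  set A : ℝ := a ^ ((2:ℝ) - (d:ℝ)) with hA
  have hE : ∀ ρ : ℝ, (Hplus d σ a ρ)⁻¹ = Real.exp (-(c * (ρ ^ ((2:ℝ)-(d:ℝ)) - A))) := by
    intro ρ; rw [Hplus, ← Real.exp_neg]
  -- derivative of the inverse of Hplus
  have hEderiv : ∀ ρ : ℝ, 0 < ρ → HasDerivAt (fun x => (Hplus d σ a x)⁻¹)
      (σ * ρ ^ ((1:ℝ)-(d:ℝ)) * (Hplus d σ a ρ)⁻¹) ρ := by
    intro ρ hρ
    have h1 : HasDerivAt (fun x : ℝ => -(c * (x ^ ((2:ℝ)-(d:ℝ)) - A)))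
        (σ * ρ ^ ((1:ℝ)-(d:ℝ))) ρ := by
      have h0 := ((Real.hasDerivAt_rpow_const (x := ρ) (p := (2:ℝ)-(d:ℝ))
        (Or.inl hρ.ne')).sub_const A)
      have h2 := (h0.const_mul c).neg
      convert h2 using 1
      case e'_4 => rfl
      case e'_5 => rfl
      case e'_8 => rfl
      rw [show (2:ℝ)-(d:ℝ)-1 = (1:ℝ)-(d:ℝ) by ring]
      rw [hc]
      field_simp
      ring
    have h3 := h1.exp
    have hfun : (fun x : ℝ => Real.exp (-(c * (x ^ ((2:ℝ)-(d:ℝ)) - A))))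
        = fun x => (Hplus d σ a x)⁻¹ := by
      funext x; rw [hE]
    rw [hfun] at h3
    convert h3 using 1
    rw [hE]
    ring
  -- derivative of ρ ↦ σ ρ^{1-d} (Hplus ρ)⁻¹
  have hEd2 : ∀ ρ : ℝ, 0 < ρ →
      HasDerivAt (fun x => σ * x ^ ((1:ℝ)-(d:ℝ)) * (Hplus d σ a x)⁻¹)
        (σ * (((1:ℝ)-(d:ℝ)) * ρ ^ ((1:ℝ)-(d:ℝ)-1)) * (Hplus d σ a ρ)⁻¹
          + σ * ρ ^ ((1:ℝ)-(d:ℝ)) * (σ * ρ ^ ((1:ℝ)-(d:ℝ)) * (Hplus d σ a ρ)⁻¹)) ρ := by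
    intro ρ hρ
    exact ((Real.hasDerivAt_rpow_const (Or.inl hρ.ne')).const_mul σ).mul (hEderiv ρ hρ)
  simp only [div_eq_mul_inv]
  -- first spatial derivative of S * Hplus⁻¹
  have hF : ∀ ρ : ℝ, a < ρ → HasDerivAt (fun x => S (x, t) * (Hplus d σ a x)⁻¹)
      (deriv (fun x => S (x, t)) ρ * (Hplus d σ a ρ)⁻¹
        + S (ρ, t) * (σ * ρ ^ ((1:ℝ)-(d:ℝ)) * (Hplus d σ a ρ)⁻¹)) ρ := by
    intro ρ hρ
    exact ((hspace1 ρ t hρ ht).hasDerivAt).mul (hEderiv ρ (ha.trans hρ))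
  have hnhds : ∀ᶠ ρ in nhds r, a < ρ := eventually_gt_nhds hr
  have hderivF : deriv (fun x => S (x, t) * (Hplus d σ a x)⁻¹) =ᶠ[nhds r]
      fun ρ => deriv (fun x => S (x, t)) ρ * (Hplus d σ a ρ)⁻¹
        + S (ρ, t) * (σ * ρ ^ ((1:ℝ)-(d:ℝ)) * (Hplus d σ a ρ)⁻¹) :=
    hnhds.mono fun ρ hρ => (hF ρ hρ).deriv
  -- second spatial derivative
  have h2nd : deriv (deriv (fun x => S (x, t) * (Hplus d σ a x)⁻¹)) r
      = (deriv (deriv (fun x => S (x, t))) r * (Hplus d σ a r)⁻¹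
          + deriv (fun x => S (x, t)) r * (σ * r ^ ((1:ℝ)-(d:ℝ)) * (Hplus d σ a r)⁻¹))
        + (deriv (fun x => S (x, t)) r * (σ * r ^ ((1:ℝ)-(d:ℝ)) * (Hplus d σ a r)⁻¹)
          + S (r, t) * (σ * (((1:ℝ)-(d:ℝ)) * r ^ ((1:ℝ)-(d:ℝ)-1)) * (Hplus d σ a r)⁻¹
            + σ * r ^ ((1:ℝ)-(d:ℝ)) * (σ * r ^ ((1:ℝ)-(d:ℝ)) * (Hplus d σ a r)⁻¹))) := by
    rw [hderivF.deriv_eq]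
    exact (((hspace2 r t hr ht).hasDerivAt.mul (hEderiv r hr0)).add
      ((hspace1 r t hr ht).hasDerivAt.mul (hEd2 r hr0))).deriv
  -- time derivative
  have htd : deriv (fun τ => S (r, τ) * (Hplus d σ a r)⁻¹) t
      = deriv (fun τ => S (r, τ)) t * (Hplus d σ a r)⁻¹ :=
    deriv_mul_const (htime r t hr ht) _
  -- power identities
  have hcast : ((d-1 : ℕ) : ℝ) = (d:ℝ) - 1 := by
    have h1 : 1 ≤ d := by omega
    push_cast [Nat.cast_sub h1]
    ring
  have hP : r ^ ((1:ℝ)-(d:ℝ)) = (r ^ (d-1 : ℕ))⁻¹ := by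
    rw [show ((1:ℝ)-(d:ℝ)) = -((d:ℝ)-1) by ring, Real.rpow_neg hr0.le, ← hcast,
      Real.rpow_natCast]
  have hexp : r ^ ((1:ℝ)-(d:ℝ)-1) = r ^ ((1:ℝ)-(d:ℝ)) / r := by
    rw [show ((1:ℝ)-(d:ℝ)-1) = ((1:ℝ)-(d:ℝ)) - 1 by ring, Real.rpow_sub hr0,
      Real.rpow_one]
  have hpne : (r : ℝ) ^ (d-1 : ℕ) ≠ 0 := pow_ne_zero _ hrne
  rw [htd, hpde r t hr ht, h2nd, (hF r hr).deriv, hexp, hP]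
  generalize r ^ (d - 1) = p at hpne ⊢
  exact duality_alg_key _ _ _ _ _ _ _ _ _ hrne hpne
end

section
/- Let d > 2 be an integer and let D > 0, σ > 0, a > 0 be real numbers. Suppose S : ℝ × ℝ → ℝ is such that for every r > a and t > 0, S is twice differentiable in its first (space) argument and differentiable in its second (time) argument, and S satisfies the negative-drift backward equation ∂ₜS(r,t) = D·[∂ᵣᵣS(r,t) + ((d−1)/r − σ/r^{d−1})·∂ᵣS(r,t)] for all r > a, t > 0. Then the function (r,t) ↦ S(r,t)·H₊(r) satisfies the positive-drift backward equation ∂ₜ(S·H₊)(r,t) = D·[∂ᵣᵣ(S·H₊)(r,t) + ((d−1)/r + σ/r^{d−1})·∂ᵣ(S·H₊)(r,t)] for all r > a, t > 0. -/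
/-- If `S` solves the negative-drift backward equation on `(a,∞) × (0,∞)`, then `S·H₊`
solves the positive-drift backward equation there. -/
theorem duality_neg_to_pos (d : ℕ) (hd : 2 < d) (D σ a : ℝ) (hD : 0 < D) (hσ : 0 < σ)
    (ha : 0 < a) (S : ℝ × ℝ → ℝ)
    (hspace1 : ∀ r t : ℝ, a < r → 0 < t → DifferentiableAt ℝ (fun ρ => S (ρ, t)) r)
    (hspace2 : ∀ r t : ℝ, a < r → 0 < t → DifferentiableAt ℝ (deriv (fun ρ => S (ρ, t))) r)
    (htime : ∀ r t : ℝ, a < r → 0 < t → DifferentiableAt ℝ (fun τ => S (r, τ)) t)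
    (hpde : ∀ r t : ℝ, a < r → 0 < t →
      deriv (fun τ => S (r, τ)) t =
        D * (deriv (deriv (fun ρ => S (ρ, t))) r +
          (((d : ℝ) - 1) / r - σ / r ^ (d - 1)) * deriv (fun ρ => S (ρ, t)) r)) :
    ∀ r t : ℝ, a < r → 0 < t →
      deriv (fun τ => S (r, τ) * Hplus d σ a r) t =
        D * (deriv (deriv (fun ρ => S (ρ, t) * Hplus d σ a ρ)) r +
          (((d : ℝ) - 1) / r + σ / r ^ (d - 1)) *
            deriv (fun ρ => S (ρ, t) * Hplus d σ a ρ) r) := by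
  intro r t har ht
  have hr : 0 < r := ha.trans har
  have hd2 : ((d : ℝ) - 2) ≠ 0 := by
    have : (2:ℝ) < d := by exact_mod_cast hd
    linarith
  have Hderiv : ∀ x : ℝ, 0 < x →
      HasDerivAt (fun ρ => Hplus d σ a ρ) (-σ * x ^ ((1:ℝ) - d) * Hplus d σ a x) x := by
    intro x hx
    have h1 : HasDerivAt (fun ρ : ℝ => ρ ^ ((2:ℝ) - d)) (((2:ℝ) - d) * x ^ ((2:ℝ) - d - 1)) x :=
      Real.hasDerivAt_rpow_const (Or.inl hx.ne')
    have h2 := ((h1.sub_const (a ^ ((2:ℝ) - d))).const_mul (σ / ((d:ℝ) - 2))).exp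
    convert h2 using 1
    · rfl
    have he : (2:ℝ) - d - 1 = 1 - d := by ring
    rw [he]
    simp only [Hplus]
    field_simp
    ring
  -- first spatial derivative of the product
  have hF : ∀ x : ℝ, a < x →
      HasDerivAt (fun ρ => S (ρ, t) * Hplus d σ a ρ)
        (deriv (fun ρ => S (ρ, t)) x * Hplus d σ a x +
          S (x, t) * (-σ * x ^ ((1:ℝ) - d) * Hplus d σ a x)) x := by
    intro x hx
    exact (hspace1 x t hx ht).hasDerivAt.mul (Hderiv x (ha.trans hx))
  have heq : deriv (fun ρ => S (ρ, t) * Hplus d σ a ρ) =ᶠ[nhds r]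
      (fun x => deriv (fun ρ => S (ρ, t)) x * Hplus d σ a x +
        S (x, t) * (-σ * x ^ ((1:ℝ) - d) * Hplus d σ a x)) := by
    filter_upwards [eventually_gt_nhds har] with x hx
    exact (hF x hx).deriv
  -- second spatial derivative
  have h3 : HasDerivAt (fun x : ℝ => x ^ ((1:ℝ) - d)) (((1:ℝ) - d) * r ^ ((1:ℝ) - d - 1)) r :=
    Real.hasDerivAt_rpow_const (Or.inl hr.ne')
  have hA : HasDerivAt (fun x : ℝ => -σ * x ^ ((1:ℝ) - d) * Hplus d σ a x)
      ((-σ * (((1:ℝ) - d) * r ^ ((1:ℝ) - d - 1))) * Hplus d σ a r +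
        (-σ * r ^ ((1:ℝ) - d)) * (-σ * r ^ ((1:ℝ) - d) * Hplus d σ a r)) r :=
    (h3.const_mul (-σ)).mul (Hderiv r hr)
  have hsecond : deriv (deriv (fun ρ => S (ρ, t) * Hplus d σ a ρ)) r =
      deriv (deriv (fun ρ => S (ρ, t))) r * Hplus d σ a r +
        deriv (fun ρ => S (ρ, t)) r * (-σ * r ^ ((1:ℝ) - d) * Hplus d σ a r) +
        (deriv (fun ρ => S (ρ, t)) r * (-σ * r ^ ((1:ℝ) - d) * Hplus d σ a r) +
          S (r, t) * ((-σ * (((1:ℝ) - d) * r ^ ((1:ℝ) - d - 1))) * Hplus d σ a r +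
            (-σ * r ^ ((1:ℝ) - d)) * (-σ * r ^ ((1:ℝ) - d) * Hplus d σ a r))) := by
    rw [heq.deriv_eq]
    exact (((hspace2 r t har ht).hasDerivAt.mul (Hderiv r hr)).add
      ((hspace1 r t har ht).hasDerivAt.mul hA)).deriv
  have hfirst : deriv (fun ρ => S (ρ, t) * Hplus d σ a ρ) r =
      deriv (fun ρ => S (ρ, t)) r * Hplus d σ a r +
        S (r, t) * (-σ * r ^ ((1:ℝ) - d) * Hplus d σ a r) :=
    (hF r har).deriv
  have htderiv : deriv (fun τ => S (r, τ) * Hplus d σ a r) t =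
      deriv (fun τ => S (r, τ)) t * Hplus d σ a r :=
    deriv_mul_const (htime r t har ht) (Hplus d σ a r)
  -- rpow bookkeeping
  have hnat : (r : ℝ) ^ (d - 1) = r ^ ((d:ℝ) - 1) := by
    rw [← Real.rpow_natCast r (d - 1)]
    congr 1
    have h1 : 1 ≤ d := by omega
    push_cast [Nat.cast_sub h1]
    ring
  have hAinv : r ^ ((1:ℝ) - d) = (r ^ ((d:ℝ) - 1))⁻¹ := by
    rw [← Real.rpow_neg hr.le]
    congr 1; ring
  have hAB : r ^ ((1:ℝ) - d) = r * r ^ (-(d:ℝ)) := by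
    rw [show (1:ℝ) - d = 1 + (-(d:ℝ)) by ring, Real.rpow_add hr, Real.rpow_one]
  have hdiv : σ / r ^ ((d:ℝ) - 1) = σ * (r * r ^ (-(d:ℝ))) := by
    rw [div_eq_mul_inv, ← hAinv, hAB]
  have hmd : (1:ℝ) - d - 1 = -(d:ℝ) := by ring
  rw [htderiv, hpde r t har ht, hsecond, hfirst, hmd, hnat, hdiv, hAB]
  have hrne : r ≠ 0 := hr.ne'
  field_simp
  ring
end

section
/- Let d > 2 be an integer and let D > 0, σ > 0, a > 0 be real numbers. Suppose S₋ : ℝ × ℝ → ℝ satisfies, for all r > a and t > 0, the negative-drift backward equation ∂ₜS₋(r,t) = D·[∂ᵣᵣS₋(r,t) + ((d−1)/r − σ/r^{d−1})·∂ᵣS₋(r,t)] (with the required space and time derivatives existing), and define S₊(r,t) := S₋(r,t)·H₊(r), f₋(r,t) := ∂ₜS₋(r,t), and f₊(r,t) := ∂ₜS₊(r,t). Then S₊ satisfies the positive-drift backward equation ∂ₜS₊(r,t) = D·[∂ᵣᵣS₊(r,t) + ((d−1)/r + σ/r^{d−1})·∂ᵣS₊(r,t)] for all r > a, t > 0, and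 moreover the conditioned positive-drift first-passage density equals the negative-drift one: f₊(r,t)/H₊(r) = f₋(r,t) for all r > a, t > 0. -/
lemma Hplus_hasDerivAt (d : ℕ) (hd : 2 < d) (σ a : ℝ) {r : ℝ} (hr : 0 < r) :
    HasDerivAt (Hplus d σ a) (-(σ / r ^ (d - 1)) * Hplus d σ a r) r := by
  have h1 : HasDerivAt (fun x : ℝ => x ^ ((2:ℝ) - (d:ℝ)))
      (((2:ℝ) - (d:ℝ)) * r ^ ((2:ℝ) - (d:ℝ) - 1)) r :=
    Real.hasDerivAt_rpow_const (Or.inl hr.ne')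
  have h2 := ((h1.sub_const (a ^ ((2:ℝ) - (d:ℝ)))).const_mul (σ / ((d:ℝ) - 2))).exp
  convert h2 using 1
  · rfl
  have hd2 : (d:ℝ) - 2 ≠ 0 := by
    have : (2:ℝ) < d := by exact_mod_cast hd
    linarith
  have hcast : ((d - 1 : ℕ) : ℝ) = (d:ℝ) - 1 := by
    have h1d : 1 ≤ d := by omega
    push_cast [h1d]; ring
  have hpow : r ^ ((2:ℝ) - (d:ℝ) - 1) = (r ^ (d - 1 : ℕ))⁻¹ := by
    rw [show (2:ℝ) - (d:ℝ) - 1 = -((d - 1 : ℕ):ℝ) by rw [hcast]; ring,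
      Real.rpow_neg hr.le, Real.rpow_natCast]
  rw [hpow]
  unfold Hplus
  have hpne : (r ^ (d - 1 : ℕ)) ≠ 0 := pow_ne_zero _ hr.ne'
  field_simp
  ring

/-- If `S₋` solves the negative-drift backward equation, then `S₊ := S₋·H₊` solves the
positive-drift backward equation, and the conditioned positive-drift first-passage density
`f₊/H₊` (where `f± = ∂ₜS±`) equals the negative-drift one `f₋`. -/
theorem first_passage_duality (d : ℕ) (hd : 2 < d) (D σ a : ℝ) (hD : 0 < D) (hσ : 0 < σ)
    (ha : 0 < a) (Sminus : ℝ × ℝ → ℝ)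
    (hspace1 : ∀ r t : ℝ, a < r → 0 < t → DifferentiableAt ℝ (fun ρ => Sminus (ρ, t)) r)
    (hspace2 : ∀ r t : ℝ, a < r → 0 < t →
      DifferentiableAt ℝ (deriv (fun ρ => Sminus (ρ, t))) r)
    (htime : ∀ r t : ℝ, a < r → 0 < t → DifferentiableAt ℝ (fun τ => Sminus (r, τ)) t)
    (hpde : ∀ r t : ℝ, a < r → 0 < t →
      deriv (fun τ => Sminus (r, τ)) t =
        D * (deriv (deriv (fun ρ => Sminus (ρ, t))) r +
          (((d : ℝ) - 1) / r - σ / r ^ (d - 1)) * deriv (fun ρ => Sminus (ρ, t)) r))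
    (Splus : ℝ × ℝ → ℝ) (hSplus : ∀ r t : ℝ, Splus (r, t) = Sminus (r, t) * Hplus d σ a r)
    (fminus fplus : ℝ × ℝ → ℝ)
    (hfminus : ∀ r t : ℝ, fminus (r, t) = deriv (fun τ => Sminus (r, τ)) t)
    (hfplus : ∀ r t : ℝ, fplus (r, t) = deriv (fun τ => Splus (r, τ)) t) :
    (∀ r t : ℝ, a < r → 0 < t →
      deriv (fun τ => Splus (r, τ)) t =
        D * (deriv (deriv (fun ρ => Splus (ρ, t))) r +
          (((d : ℝ) - 1) / r + σ / r ^ (d - 1)) * deriv (fun ρ => Splus (ρ, t)) r)) ∧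
    (∀ r t : ℝ, a < r → 0 < t → fplus (r, t) / Hplus d σ a r = fminus (r, t)) := by
  obtain ⟨e, rfl⟩ : ∃ e, d = e + 3 := ⟨d - 3, by omega⟩
  set G : ℝ → ℝ := Hplus (e + 3) σ a with hGdef
  have htderiv : ∀ r t : ℝ, a < r → 0 < t →
      deriv (fun τ => Splus (r, τ)) t = deriv (fun τ => Sminus (r, τ)) t * G r := by
    intro r t hr ht
    have h : (fun τ => Splus (r, τ)) = fun τ => Sminus (r, τ) * G r :=
      funext fun τ => hSplus r τ
    rw [h, deriv_mul_const (htime r t hr ht)]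
  refine ⟨?_, ?_⟩
  · intro r t hr ht
    have hr0 : 0 < r := ha.trans hr
    have hfun : (fun ρ => Splus (ρ, t)) = fun ρ => Sminus (ρ, t) * G ρ :=
      funext fun ρ => hSplus ρ t
    set u : ℝ → ℝ := deriv (fun x => Sminus (x, t)) with hu
    have hF : ∀ ρ : ℝ, a < ρ → HasDerivAt (fun x => Sminus (x, t) * G x)
        (u ρ * G ρ + Sminus (ρ, t) * (-(σ / ρ ^ (e + 2)) * G ρ)) ρ := by
      intro ρ hρ
      have hρ0 : 0 < ρ := ha.trans hρ
      exact ((hspace1 ρ t hρ ht).hasDerivAt).mul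
        (by simpa using Hplus_hasDerivAt (e + 3) (by omega) σ a hρ0)
    have hev : deriv (fun x => Sminus (x, t) * G x) =ᶠ[nhds r]
        fun ρ => u ρ * G ρ + Sminus (ρ, t) * (-(σ / ρ ^ (e + 2)) * G ρ) := by
      filter_upwards [Ioi_mem_nhds hr] with ρ hρ
      exact (hF ρ hρ).deriv
    have hGr : HasDerivAt G (-(σ / r ^ (e + 2)) * G r) r := by
      simpa using Hplus_hasDerivAt (e + 3) (by omega) σ a hr0
    have hBr : HasDerivAt (fun ρ : ℝ => σ / ρ ^ (e + 2))
        ((0 * r ^ (e + 2) - σ * (((e + 2 : ℕ) : ℝ) * r ^ (e + 1))) / (r ^ (e + 2)) ^ 2) r :=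
      (hasDerivAt_const r σ).div (by simpa using hasDerivAt_pow (e + 2) r)
        (pow_ne_zero _ hr0.ne')
    have hW : HasDerivAt
        (fun ρ => u ρ * G ρ + Sminus (ρ, t) * (-(σ / ρ ^ (e + 2)) * G ρ))
        (deriv u r * G r + u r * (-(σ / r ^ (e + 2)) * G r) +
          (u r * (-(σ / r ^ (e + 2)) * G r) +
           Sminus (r, t) *
             (-((0 * r ^ (e + 2) - σ * (((e + 2 : ℕ) : ℝ) * r ^ (e + 1))) / (r ^ (e + 2)) ^ 2) * G r +
              -(σ / r ^ (e + 2)) * (-(σ / r ^ (e + 2)) * G r)))) r :=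
      ((hspace2 r t hr ht).hasDerivAt.mul hGr).add
        ((hspace1 r t hr ht).hasDerivAt.mul (hBr.neg.mul hGr))
    rw [htderiv r t hr ht, hpde r t hr ht, hfun, hev.deriv_eq, hW.deriv, (hF r hr).deriv]
    have hpow1 : e + 3 - 1 = e + 2 := rfl
    rw [hpow1]
    have hrne : r ≠ 0 := hr0.ne'
    have hpne : r ^ (e + 2) ≠ 0 := pow_ne_zero _ hrne
    push_cast
    field_simp
    ring
  · intro r t hr ht
    rw [hfplus, hfminus, htderiv r t hr ht, mul_div_assoc,
      div_self (show G r ≠ 0 from (Real.exp_pos _).ne'), mul_one]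
end

section
/- For all reals D > 0, x₀ > 0, and σ ≥ 0, the negative-drift first-passage density is a probability density in time (the process is recurrent): ∫₀^∞ (x₀/√(4πDt³))·exp(−(x₀ − σt)²/(4Dt)) dt = 1. -/
open MeasureTheory Filter Real Set intervalIntegral Topology

noncomputable def erfG (x : ℝ) : ℝ := ∫ s in (0:ℝ)..x, Real.exp (-s^2)

lemma gauss_integrable : Integrable (fun s : ℝ => Real.exp (-s^2)) := by
  have := integrable_exp_neg_mul_sq (b := 1) one_pos
  simpa using this

lemma gauss_cont : Continuous (fun s : ℝ => Real.exp (-s^2)) := by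
  continuity

lemma erfG_hasDerivAt (x : ℝ) : HasDerivAt erfG (Real.exp (-x^2)) x := by
  exact intervalIntegral.integral_hasDerivAt_right
    gauss_integrable.intervalIntegrable
    gauss_cont.aestronglyMeasurable.stronglyMeasurableAtFilter
    gauss_cont.continuousAt

lemma erfG_zero : erfG 0 = 0 := by simp [erfG]

lemma erfG_tendsto_atTop : Tendsto erfG atTop (𝓝 (Real.sqrt π / 2)) := by
  have h := intervalIntegral_tendsto_integral_Ioi (μ := volume) 0
    gauss_integrable.integrableOn (tendsto_id (α := ℝ))
  have : (∫ s in Ioi (0:ℝ), Real.exp (-s^2)) = Real.sqrt π / 2 := by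
    have := integral_gaussian_Ioi 1
    simpa using this
  rwa [this] at h

lemma integral_Iic_gauss : (∫ s in Iic (0:ℝ), Real.exp (-s^2)) = Real.sqrt π / 2 := by
  have h : (∫ s in Ioi (0:ℝ), Real.exp (-(-s)^2)) = ∫ s in Iic (-(0:ℝ)), Real.exp (-s^2) :=
    integral_comp_neg_Ioi (c := 0) (f := fun s => Real.exp (-s^2))
  simp only [neg_zero, neg_neg] at h
  rw [← h]
  simp only [neg_neg, even_two, Even.neg_pow]
  have := integral_gaussian_Ioi 1
  simpa using this

lemma erfG_tendsto_atBot : Tendsto erfG atBot (𝓝 (-(Real.sqrt π / 2))) := by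
  have h := intervalIntegral_tendsto_integral_Iic (μ := volume) 0
    gauss_integrable.integrableOn (tendsto_id (α := ℝ))
  rw [integral_Iic_gauss] at h
  have : erfG = fun x => -(∫ s in x..(0:ℝ), Real.exp (-s^2)) := by
    funext x; rw [erfG, intervalIntegral.integral_symm]
  rw [this]
  exact h.neg

lemma sqrt_tendsto_atTop : Tendsto Real.sqrt atTop atTop := by
  apply tendsto_atTop_atTop_of_monotone (fun a b h => Real.sqrt_le_sqrt h)
  intro b
  exact ⟨(max b 0)^2, by rw [Real.sqrt_sq (le_max_right _ _)]; exact le_max_left _ _⟩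

lemma hasDerivAt_Fm (D x₀ σ : ℝ) (hD : 0 < D) (t : ℝ) (ht : 0 < t) :
    HasDerivAt (fun t => (Real.sqrt π)⁻¹ *
        ((Real.sqrt π / 2 - erfG ((x₀ - σ*t)/(2*Real.sqrt D*Real.sqrt t)))
          + Real.exp (σ*x₀/D) * (Real.sqrt π / 2 - erfG ((x₀ + σ*t)/(2*Real.sqrt D*Real.sqrt t)))))
      (x₀ / Real.sqrt (4 * Real.pi * D * t ^ 3) *
          Real.exp (-(x₀ - σ * t) ^ 2 / (4 * D * t))) t := by
  set a := Real.sqrt D with ha_def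
  set sp := Real.sqrt π with hsp_def
  have ha : 0 < a := Real.sqrt_pos.2 hD
  have hsp : 0 < sp := Real.sqrt_pos.2 Real.pi_pos
  have hs : 0 < Real.sqrt t := Real.sqrt_pos.2 ht
  set s := Real.sqrt t with hs_def
  have hss : s^2 = t := Real.sq_sqrt ht.le
  have ha2 : a^2 = D := Real.sq_sqrt hD.le
  have hsp2 : sp^2 = π := Real.sq_sqrt Real.pi_pos.le
  have hden : 2*a*s ≠ 0 := by positivity
  have hP : (2*a*s)^2 = 4*D*t := by rw [mul_pow, mul_pow, ha2, hss]; ring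
  have hsqrtT : HasDerivAt Real.sqrt (1/(2*s)) t := Real.hasDerivAt_sqrt ht.ne'
  have hdenD : HasDerivAt (fun t => 2*a*Real.sqrt t) (2*a*(1/(2*s))) t := hsqrtT.const_mul _
  have hnu : HasDerivAt (fun t => x₀ - σ*t) (-σ) t := by
    simpa using ((hasDerivAt_id t).const_mul σ).const_sub x₀
  have hnv : HasDerivAt (fun t => x₀ + σ*t) σ t := by
    simpa using ((hasDerivAt_id t).const_mul σ).const_add x₀
  have hu : HasDerivAt (fun t => (x₀ - σ*t)/(2*a*Real.sqrt t))
      (((-σ)*(2*a*s) - (x₀-σ*t)*(2*a*(1/(2*s))))/(2*a*s)^2) t := hnu.div hdenD hden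
  have hv : HasDerivAt (fun t => (x₀ + σ*t)/(2*a*Real.sqrt t))
      ((σ*(2*a*s) - (x₀+σ*t)*(2*a*(1/(2*s))))/(2*a*s)^2) t := hnv.div hdenD hden
  set u' := ((-σ)*(2*a*s) - (x₀-σ*t)*(2*a*(1/(2*s))))/(2*a*s)^2 with hu'_def
  set v' := ((σ)*(2*a*s) - (x₀+σ*t)*(2*a*(1/(2*s))))/(2*a*s)^2 with hv'_def
  have hGu : HasDerivAt (fun t => erfG ((x₀ - σ*t)/(2*a*Real.sqrt t)))
      (Real.exp (-((x₀ - σ*t)/(2*a*s))^2) * u') t :=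
    (erfG_hasDerivAt _).comp t hu
  have hGv : HasDerivAt (fun t => erfG ((x₀ + σ*t)/(2*a*Real.sqrt t)))
      (Real.exp (-((x₀ + σ*t)/(2*a*s))^2) * v') t :=
    (erfG_hasDerivAt _).comp t hv
  set EU := Real.exp (-((x₀ - σ*t)/(2*a*s))^2) with hEU_def
  set EV := Real.exp (-((x₀ + σ*t)/(2*a*s))^2) with hEV_def
  set ec := Real.exp (σ*x₀/D) with hec_def
  have hd : HasDerivAt (fun t => sp⁻¹ *
      ((sp / 2 - erfG ((x₀ - σ*t)/(2*a*Real.sqrt t)))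
        + ec * (sp / 2 - erfG ((x₀ + σ*t)/(2*a*Real.sqrt t)))))
      (sp⁻¹ * (-(EU * u') + ec * -(EV * v'))) t :=
    ((hGu.const_sub (sp/2)).add ((hGv.const_sub (sp/2)).const_mul ec)).const_mul sp⁻¹
  have hvexp : ec * EV = EU := by
    rw [hec_def, hEU_def, hEV_def, ← Real.exp_add]
    congr 1
    rw [div_pow, div_pow, hP]
    field_simp
    ring
  have hsq : Real.sqrt (4 * π * D * t ^ 3) = sp*(2*a*s)*t := by
    rw [show 4 * π * D * t ^ 3 = (sp*(2*a*s)*t)^2 by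
      rw [mul_pow, mul_pow, hsp2, hP]; ring]
    exact Real.sqrt_sq (by positivity)
  have hEUeq : Real.exp (-(x₀ - σ * t) ^ 2 / (4 * D * t)) = EU := by
    rw [hEU_def]; congr 1
    rw [div_pow, hP]; ring
  have heq : sp⁻¹ * (-(EU * u') + ec * -(EV * v')) =
      x₀ / Real.sqrt (4 * π * D * t ^ 3) * Real.exp (-(x₀ - σ * t) ^ 2 / (4 * D * t)) := by
    rw [hsq, hEUeq]
    have hcomb : -(EU * u') + ec * -(EV * v') = EU * (-u' - v') := by
      rw [← hvexp]; ring
    rw [hcomb, hu'_def, hv'_def]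
    have ht' : t = s^2 := hss.symm
    rw [ht']
    field_simp
    ring
  exact heq ▸ hd

/-- The negative-drift first-passage density is a probability density in time (the process
is recurrent): `∫₀^∞ (x₀/√(4πDt³))·exp(−(x₀−σt)²/(4Dt)) dt = 1`. -/
theorem integral_fminus_eq_one (D x₀ σ : ℝ) (hD : 0 < D) (hx₀ : 0 < x₀) (hσ : 0 ≤ σ) :
    ∫ t in Set.Ioi (0 : ℝ),
        x₀ / Real.sqrt (4 * Real.pi * D * t ^ 3) *
          Real.exp (-(x₀ - σ * t) ^ 2 / (4 * D * t)) = 1 := by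
  have ha : 0 < Real.sqrt D := Real.sqrt_pos.2 hD
  have hsp : 0 < Real.sqrt π := Real.sqrt_pos.2 Real.pi_pos
  set a := Real.sqrt D with ha_def
  set sp := Real.sqrt π with hsp_def
  set ec := Real.exp (σ*x₀/D) with hec_def
  set Fm : ℝ → ℝ := fun t => sp⁻¹ *
      ((sp / 2 - erfG ((x₀ - σ*t)/(2*a*Real.sqrt t)))
        + ec * (sp / 2 - erfG ((x₀ + σ*t)/(2*a*Real.sqrt t)))) with hFm_def
  set F : ℝ → ℝ := fun t => if t ≤ 0 then 0 else Fm t with hF_def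
  have hF0 : F 0 = 0 := by simp [hF_def]
  -- eventual equality on positive reals
  have hFeq : ∀ t : ℝ, 0 < t → F t = Fm t := fun t ht => if_neg (not_le.2 ht)
  -- derivative
  have hderiv : ∀ t ∈ Ioi (0:ℝ), HasDerivAt F
      (x₀ / Real.sqrt (4 * Real.pi * D * t ^ 3) *
          Real.exp (-(x₀ - σ * t) ^ 2 / (4 * D * t))) t := by
    intro t ht
    have hd := hasDerivAt_Fm D x₀ σ hD t ht
    apply hd.congr_of_eventuallyEq
    filter_upwards [Ioi_mem_nhds ht] with x hx
    exact hFeq x hx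
  -- nonnegativity
  have hpos : ∀ t ∈ Ioi (0:ℝ), 0 ≤ x₀ / Real.sqrt (4 * Real.pi * D * t ^ 3) *
      Real.exp (-(x₀ - σ * t) ^ 2 / (4 * D * t)) := by
    intro t _
    positivity
  -- continuity at 0 from the right
  have h2as : Tendsto (fun t : ℝ => 2*a*Real.sqrt t) (𝓝[>] 0) (𝓝[>] 0) := by
    rw [tendsto_nhdsWithin_iff]
    constructor
    · have : Tendsto (fun t : ℝ => 2*a*Real.sqrt t) (𝓝 0) (𝓝 (2*a*Real.sqrt 0)) :=
        (continuous_const.mul Real.continuous_sqrt).tendsto 0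
      simpa using this.mono_left nhdsWithin_le_nhds
    · filter_upwards [self_mem_nhdsWithin] with t (ht : 0 < t)
      have : 0 < Real.sqrt t := Real.sqrt_pos.2 ht
      exact mem_Ioi.2 (by positivity)
  have hinv0 : Tendsto (fun t : ℝ => (2*a*Real.sqrt t)⁻¹) (𝓝[>] 0) atTop :=
    h2as.inv_tendsto_nhdsGT_zero
  have hnum_u : Tendsto (fun t : ℝ => x₀ - σ*t) (𝓝[>] 0) (𝓝 x₀) := by
    have : Tendsto (fun t : ℝ => x₀ - σ*t) (𝓝 0) (𝓝 (x₀ - σ*0)) :=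
      (continuous_const.sub (continuous_const.mul continuous_id)).tendsto 0
    simpa using this.mono_left nhdsWithin_le_nhds
  have hnum_v : Tendsto (fun t : ℝ => x₀ + σ*t) (𝓝[>] 0) (𝓝 x₀) := by
    have : Tendsto (fun t : ℝ => x₀ + σ*t) (𝓝 0) (𝓝 (x₀ + σ*0)) :=
      (continuous_const.add (continuous_const.mul continuous_id)).tendsto 0
    simpa using this.mono_left nhdsWithin_le_nhds
  have hu_top : Tendsto (fun t : ℝ => (x₀ - σ*t)/(2*a*Real.sqrt t)) (𝓝[>] 0) atTop := by
    have := hnum_u.pos_mul_atTop hx₀ hinv0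
    simpa [div_eq_mul_inv] using this
  have hv_top : Tendsto (fun t : ℝ => (x₀ + σ*t)/(2*a*Real.sqrt t)) (𝓝[>] 0) atTop := by
    have := hnum_v.pos_mul_atTop hx₀ hinv0
    simpa [div_eq_mul_inv] using this
  have hcont : ContinuousWithinAt F (Ici (0:ℝ)) 0 := by
    rw [← continuousWithinAt_Ioi_iff_Ici]
    unfold ContinuousWithinAt
    rw [hF0]
    have hFm_tendsto : Tendsto Fm (𝓝[>] 0) (𝓝 (sp⁻¹ * ((sp/2 - sp/2) + ec * (sp/2 - sp/2)))) := by
      exact (((tendsto_const_nhds.sub (erfG_tendsto_atTop.comp hu_top)).add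
        ((tendsto_const_nhds.sub (erfG_tendsto_atTop.comp hv_top)).const_mul ec)).const_mul sp⁻¹)
    have : Tendsto Fm (𝓝[>] 0) (𝓝 0) := by simpa using hFm_tendsto
    apply this.congr'
    filter_upwards [self_mem_nhdsWithin] with t (ht : 0 < t)
    exact (hFeq t ht).symm
  -- limit at infinity
  have hsqrt_top : Tendsto (fun t : ℝ => Real.sqrt t) atTop atTop := sqrt_tendsto_atTop
  have hinv_top : Tendsto (fun t : ℝ => (2*a*Real.sqrt t)⁻¹) atTop (𝓝 0) :=
    (hsqrt_top.const_mul_atTop (by positivity : (0:ℝ) < 2*a)).inv_tendsto_atTop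
  have hsplit_u : ∀ t : ℝ, 0 < t →
      (x₀ - σ*t)/(2*a*Real.sqrt t) = x₀ * (2*a*Real.sqrt t)⁻¹ + -((σ/(2*a)) * Real.sqrt t) := by
    intro t ht
    have hs : 0 < Real.sqrt t := Real.sqrt_pos.2 ht
    have hss : Real.sqrt t * Real.sqrt t = t := Real.mul_self_sqrt ht.le
    field_simp
    linear_combination σ * hss
  have hsplit_v : ∀ t : ℝ, 0 < t →
      (x₀ + σ*t)/(2*a*Real.sqrt t) = x₀ * (2*a*Real.sqrt t)⁻¹ + (σ/(2*a)) * Real.sqrt t := by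
    intro t ht
    have hs : 0 < Real.sqrt t := Real.sqrt_pos.2 ht
    have hss : Real.sqrt t * Real.sqrt t = t := Real.mul_self_sqrt ht.le
    field_simp
    linear_combination (-σ) * hss
  have htop : Tendsto F atTop (𝓝 1) := by
    have hFev : F =ᶠ[atTop] Fm := by
      filter_upwards [eventually_gt_atTop 0] with t ht
      exact hFeq t ht
    rcases hσ.eq_or_lt with hσ0 | hσpos
    · -- σ = 0
      subst hσ0
      have hu0 : Tendsto (fun t : ℝ => (x₀ - 0*t)/(2*a*Real.sqrt t)) atTop (𝓝 0) := by
        have := hinv_top.const_mul x₀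
        simp only [mul_zero, zero_mul, sub_zero] at *
        simpa [div_eq_mul_inv] using this
      have hv0 : Tendsto (fun t : ℝ => (x₀ + 0*t)/(2*a*Real.sqrt t)) atTop (𝓝 0) := by
        have := hinv_top.const_mul x₀
        simpa [div_eq_mul_inv] using this
      have hGu : Tendsto (fun t : ℝ => erfG ((x₀ - 0*t)/(2*a*Real.sqrt t))) atTop (𝓝 0) := by
        have := ((erfG_hasDerivAt 0).continuousAt.tendsto).comp hu0
        simpa [erfG_zero, Function.comp_def] using this
      have hGv : Tendsto (fun t : ℝ => erfG ((x₀ + 0*t)/(2*a*Real.sqrt t))) atTop (𝓝 0) := by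
        have := ((erfG_hasDerivAt 0).continuousAt.tendsto).comp hv0
        simpa [erfG_zero, Function.comp_def] using this
      have hec1 : ec = 1 := by simp [hec_def]
      have hFm_tendsto : Tendsto Fm atTop (𝓝 (sp⁻¹ * ((sp/2 - 0) + ec * (sp/2 - 0)))) :=
        (((tendsto_const_nhds.sub hGu).add
          ((tendsto_const_nhds.sub hGv).const_mul ec)).const_mul sp⁻¹)
      have hval : sp⁻¹ * ((sp/2 - 0) + ec * (sp/2 - 0)) = 1 := by
        rw [hec1]
        field_simp
        ring
      rw [hval] at hFm_tendsto
      exact hFm_tendsto.congr' hFev.symm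
    · -- σ > 0
      have hu_bot : Tendsto (fun t : ℝ => (x₀ - σ*t)/(2*a*Real.sqrt t)) atTop atBot := by
        have hbot : Tendsto (fun t : ℝ => -((σ/(2*a)) * Real.sqrt t)) atTop atBot := by
          exact tendsto_neg_atTop_atBot.comp
            (hsqrt_top.const_mul_atTop (by positivity : (0:ℝ) < σ/(2*a)))
        have := (hinv_top.const_mul x₀).add_atBot hbot
        apply this.congr'
        filter_upwards [eventually_gt_atTop 0] with t ht
        exact (hsplit_u t ht).symm
      have hv_top' : Tendsto (fun t : ℝ => (x₀ + σ*t)/(2*a*Real.sqrt t)) atTop atTop := by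
        have htop' : Tendsto (fun t : ℝ => (σ/(2*a)) * Real.sqrt t) atTop atTop :=
          hsqrt_top.const_mul_atTop (by positivity : (0:ℝ) < σ/(2*a))
        have := (hinv_top.const_mul x₀).add_atTop htop'
        apply this.congr'
        filter_upwards [eventually_gt_atTop 0] with t ht
        exact (hsplit_v t ht).symm
      have hGu : Tendsto (fun t : ℝ => erfG ((x₀ - σ*t)/(2*a*Real.sqrt t))) atTop
          (𝓝 (-(sp/2))) := erfG_tendsto_atBot.comp hu_bot
      have hGv : Tendsto (fun t : ℝ => erfG ((x₀ + σ*t)/(2*a*Real.sqrt t))) atTop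
          (𝓝 (sp/2)) := erfG_tendsto_atTop.comp hv_top'
      have hFm_tendsto : Tendsto Fm atTop (𝓝 (sp⁻¹ * ((sp/2 - -(sp/2)) + ec * (sp/2 - sp/2)))) :=
        (((tendsto_const_nhds.sub hGu).add
          ((tendsto_const_nhds.sub hGv).const_mul ec)).const_mul sp⁻¹)
      have hval : sp⁻¹ * ((sp/2 - -(sp/2)) + ec * (sp/2 - sp/2)) = 1 := by
        field_simp
        ring
      rw [hval] at hFm_tendsto
      exact hFm_tendsto.congr' hFev.symm
  have key := integral_Ioi_of_hasDerivAt_of_nonneg hcont hderiv hpos htop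
  rw [key, hF0, sub_zero]
end

section
/- Let D > 0, σ > 0, and a > 0 be real numbers, and let H₊(r) = (r/a)^{−σ/D} on (0,∞). Suppose T : (0,∞) → ℝ is twice differentiable and satisfies the negative-drift mean first-passage-time equation D·T''(r) + ((D − σ)/r)·T'(r) = −1 for all r > 0. Then the product W(r) := H₊(r)·T(r) satisfies the conditional mean first-passage-time equation D·W''(r) + ((D + σ)/r)·W'(r) = −H₊(r) for all r > 0. -/
/-- The two-dimensional hitting probability `H₊(r) = (r/a)^{−σ/D}` for outward radial
drift of strength `σ`, targeting the circle of radius `a`. -/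
noncomputable def Hplus2 (D σ a r : ℝ) : ℝ := (r / a) ^ (-(σ / D))

/-- If `T` solves the negative-drift mean first-passage-time equation
`D·T'' + ((D−σ)/r)·T' = −1`, then `W := H₊·T` solves the conditional mean
first-passage-time equation `D·W'' + ((D+σ)/r)·W' = −H₊`. -/
theorem conditional_mfpt_equation (D σ a : ℝ) (hD : 0 < D) (hσ : 0 < σ) (ha : 0 < a)
    (T : ℝ → ℝ)
    (hT1 : ∀ r : ℝ, 0 < r → DifferentiableAt ℝ T r)
    (hT2 : ∀ r : ℝ, 0 < r → DifferentiableAt ℝ (deriv T) r)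
    (hTode : ∀ r : ℝ, 0 < r →
      D * deriv (deriv T) r + (D - σ) / r * deriv T r = -1) :
    ∀ r : ℝ, 0 < r →
      D * deriv (deriv (fun x => Hplus2 D σ a x * T x)) r +
          (D + σ) / r * deriv (fun x => Hplus2 D σ a x * T x) r =
        -Hplus2 D σ a r := by
  intro r hr
  have hD' : D ≠ 0 := ne_of_gt hD
  have ha' : a ≠ 0 := ne_of_gt ha
  have hr' : r ≠ 0 := ne_of_gt hr
  set c : ℝ := -(σ / D) with hc
  have hH : ∀ s : ℝ, 0 < s → HasDerivAt (fun x => Hplus2 D σ a x) (c * (Hplus2 D σ a s / s)) s := by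
    intro s hs
    have hs' : s ≠ 0 := ne_of_gt hs
    have hsa : 0 < s / a := div_pos hs ha
    have h1 : HasDerivAt (fun x : ℝ => x / a) (1 / a) s := by
      simpa using (hasDerivAt_id s).div_const a
    have h2 : HasDerivAt (fun x : ℝ => x ^ c) (c * (s / a) ^ (c - 1)) (s / a) :=
      Real.hasDerivAt_rpow_const (Or.inl (ne_of_gt hsa))
    have h3 := h2.comp s h1
    have hval : c * (s / a) ^ (c - 1) * (1 / a) = c * (Hplus2 D σ a s / s) := by
      rw [Real.rpow_sub hsa, Real.rpow_one, Hplus2]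
      field_simp
      rw [hc]
    rw [hval] at h3
    exact h3
  have hW : ∀ s : ℝ, 0 < s → HasDerivAt (fun x => Hplus2 D σ a x * T x)
      (c * (Hplus2 D σ a s / s) * T s + Hplus2 D σ a s * deriv T s) s :=
    fun s hs => (hH s hs).mul (hT1 s hs).hasDerivAt
  have hW1 : ∀ s : ℝ, 0 < s → deriv (fun x => Hplus2 D σ a x * T x) s =
      c * (Hplus2 D σ a s / s) * T s + Hplus2 D σ a s * deriv T s :=
    fun s hs => (hW s hs).deriv
  have heq : deriv (fun x => Hplus2 D σ a x * T x) =ᶠ[nhds r]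
      fun s => c * (Hplus2 D σ a s / s) * T s + Hplus2 D σ a s * deriv T s := by
    filter_upwards [Ioi_mem_nhds hr] with s hs using hW1 s hs
  have hg : HasDerivAt (fun s => c * (Hplus2 D σ a s / s) * T s + Hplus2 D σ a s * deriv T s)
      (c * ((c * (Hplus2 D σ a r / r) * r - Hplus2 D σ a r * 1) / r ^ 2) * T r
        + c * (Hplus2 D σ a r / r) * deriv T r
        + (c * (Hplus2 D σ a r / r) * deriv T r
            + Hplus2 D σ a r * deriv (deriv T) r)) r := by
    have h1 := hH r hr
    have h2 := (hT1 r hr).hasDerivAt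
    have h3 := (hT2 r hr).hasDerivAt
    have hdiv : HasDerivAt (fun s => Hplus2 D σ a s / s)
        ((c * (Hplus2 D σ a r / r) * r - Hplus2 D σ a r * 1) / r ^ 2) r :=
      h1.div (hasDerivAt_id r) hr'
    exact ((hdiv.const_mul c).mul h2).add (h1.mul h3)
  have hdd : deriv (deriv (fun x => Hplus2 D σ a x * T x)) r =
      c * ((c * (Hplus2 D σ a r / r) * r - Hplus2 D σ a r * 1) / r ^ 2) * T r
        + c * (Hplus2 D σ a r / r) * deriv T r
        + (c * (Hplus2 D σ a r / r) * deriv T r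
            + Hplus2 D σ a r * deriv (deriv T) r) := by
    rw [heq.deriv_eq]
    exact hg.deriv
  rw [hdd, hW1 r hr]
  have key := hTode r hr
  have hDc : D * c = -σ := by rw [hc]; field_simp
  set Hr := Hplus2 D σ a r
  set T0 := T r
  set T1 := deriv T r
  set T2 := deriv (deriv T) r
  have key' : D * T2 * r + (D - σ) * T1 = -r := by
    field_simp at key; linarith [key]
  have e : c * (Hr / r) * r = c * Hr := by rw [mul_assoc, div_mul_cancel₀ _ hr']
  rw [e]
  linear_combination Hr * key + (Hr * T0 * c / r ^ 2 + 2 * Hr * T1 / r) * hDc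
end
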